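/- arXiv:1703.05200 — 3 statements merged into one kernel-verified Lean document; each statement's English description precedes it below -/
import Mathlib

section
/- The subgroup Γ = φ⁻¹(Stab(1)) of SL₂(ℤ) has index 100 in SL₂(ℤ), where Stab(1) is the stabilizer in S₁₀₀ of the point 1. -/
/-- The transposition `(a, b)` in cycle notation. -/
def c2 (a b : Fin 100) : Equiv.Perm (Fin 100) := Equiv.swap a b

/-- The 3-cycle `(a, b, c)` in cycle notation (sending `a ↦ b ↦ c ↦ a`). -/
def c3 (a b c : Fin 100) : Equiv.Perm (Fin 100) := Equiv.swap a c * Equiv.swap a b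

/-- The permutation σ₀ (points `1,…,100` are encoded in `Fin 100`, with `100` encoded as `0`). -/
def sigma0 : Equiv.Perm (Fin 100) :=
    c2 1 84 * c2 2 20 * c2 3 48 * c2 4 56 *
    c2 5 82 * c2 6 67 * c2 7 55 * c2 8 41 *
    c2 9 35 * c2 10 40 * c2 11 78 * c2 12 100 *
    c2 13 49 * c2 14 37 * c2 15 94 * c2 16 76 *
    c2 17 19 * c2 18 44 * c2 21 34 * c2 22 85 *
    c2 23 92 * c2 24 57 * c2 25 75 * c2 26 28 *
    c2 27 64 * c2 29 90 * c2 30 97 * c2 31 38 *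
    c2 32 68 * c2 33 69 * c2 36 53 * c2 39 61 *
    c2 42 73 * c2 43 91 * c2 45 86 * c2 46 81 *
    c2 47 89 * c2 50 93 * c2 51 96 * c2 52 72 *
    c2 54 74 * c2 58 99 * c2 59 95 * c2 60 63 *
    c2 62 83 * c2 65 70 * c2 66 88 * c2 71 87 *
    c2 77 98 * c2 79 80

/-- The permutation σ₁ (points `1,…,100` are encoded in `Fin 100`, with `100` encoded as `0`). -/
def sigma1 : Equiv.Perm (Fin 100) :=
    c3 1 80 22 * c3 2 9 11 * c3 3 53 87 * c3 4 23 78 *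
    c3 5 51 18 * c3 6 37 24 * c3 8 27 60 * c3 10 62 47 *
    c3 12 65 31 * c3 13 64 19 * c3 14 61 52 * c3 15 98 25 *
    c3 16 73 32 * c3 17 39 33 * c3 20 97 58 * c3 21 96 67 *
    c3 26 93 99 * c3 28 57 35 * c3 29 71 55 * c3 30 69 45 *
    c3 34 86 82 * c3 38 59 94 * c3 40 43 91 * c3 42 68 44 *
    c3 46 85 89 * c3 48 76 90 * c3 49 92 77 * c3 50 66 88 *
    c3 54 95 56 * c3 63 74 72 * c3 70 81 75 * c3 79 100 83

/-- `φ⁻¹(Stab(1))`, the preimage in `SL₂(ℤ)` of the stabilizer of the point `1`. -/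
def Gamma' (phi : Matrix.SpecialLinearGroup (Fin 2) ℤ →* Equiv.Perm (Fin 100)) :
    Subgroup (Matrix.SpecialLinearGroup (Fin 2) ℤ) :=
  Subgroup.comap phi (MulAction.stabilizer (Equiv.Perm (Fin 100)) (1 : Fin 100))

def wordOf (x : Fin 100) : List Bool :=
  match x.val with
  | 0 => [true, false, true]
  | 1 => []
  | 2 => [true, false, true, false, true, true, false, true, false, true, false, true, true, false, true]
  | 3 => [true, false, true, false, true, true, false, true, false, true, true, false, true, false, true, false, true, true, false, true, true, false, true, false, true, false, true, true, false, true, true, false]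
  | 4 => [true, false, true, false, true, true, false, true, false, true, false]
  | 5 => [true, false, true, false, true, true, false, true, false, true, false, true, true, false, true, false, true, false, true, true, false, true, false]
  | 6 => [true, false, true, false, true, true, false, true, false, true, true, false, true, false, true, false, true, true]
  | 7 => [true, false, true, false, true, true, false, true, false, true, true, false, true, false, true, false, true, true, false, true, true, false, true, false, true, false, true, true, false, true, false, true, true, false]
  | 8 => [true, false, true, false, true, true, false, true, false, true, true, false, true, true, false, true]
  | 9 => [true, false, true, false, true, true, false, true, false, true, false, true, true, false, true, true]
  | 10 => [true, true, false, true, false, true]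
  | 11 => [true, false, true, false, true, true, false, true, false, true, false, true, true, false]
  | 12 => [true, false, true, false]
  | 13 => [true, true, false, true, true, false, true, false, true, true, false, true, false]
  | 14 => [true, false, true, false, true, true, false, true, false, true, true, false, true, false, true]
  | 15 => [true, true, false, true, true, false, true, false, true]
  | 16 => [true, false, true, false, true, true, false, true, false, true, true, false, true, false, true, false, true, true, false, true, true, false, true, false, true, false, true, true]
  | 17 => [true, true, false, true, true, false, true, false, true, true, false, true, false, true, true, false]
  | 18 => [true, false, true, false, true, true, false, true, false, true, true, false, true, false, true, false, true, true, false, true, true, false, true]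
  | 19 => [true, true, false, true, true, false, true, false, true, true, false, true, false, true, true]
  | 20 => [true, false, true, false, true, true, false, true, false, true, false, true, true, false, true, false]
  | 21 => [true, false, true, false, true, true, false, true, false, true, true, false, true, false, true, false, true, true, false, true]
  | 22 => [true, true]
  | 23 => [true, false, true, false, true, true, false, true, false, true, false, true]
  | 24 => [true, false, true, false, true, true, false, true, false, true, true, false, true, false, true, false, true]
  | 25 => [true, true, false, true, true, false, true, false]
  | 26 => [true, false, true, false, true, true, false, true, false, true, false, true, true, false, true, true, false, true, false]
  | 27 => [true, true, false, true, true, false, true, false, true, true, false, true, false, true, false]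
  | 28 => [true, false, true, false, true, true, false, true, false, true, false, true, true, false, true, true, false, true]
  | 29 => [true, false, true, false, true, true, false, true, false, true, true, false, true, false, true, false, true, true, false, true, true, false, true, false, true, false, true, true, false, true, false]
  | 30 => [true, false, true, false, true, true, false, true, false, true, false, true, true, false, true, false, true, false]
  | 31 => [true, false, true, false, true, true]
  | 32 => [true, false, true, false, true, true, false, true, false, true, true, false, true, false, true, false, true, true, false, true, true, false, true, false, true, false, true]
  | 33 => [true, false, true, false, true, true, false, true, false, true, true, false, true, false, true, true, false, true]
  | 34 => [true, false, true, false, true, true, false, true, false, true, true, false, true, false, true, false, true, true, false, true, false]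
  | 35 => [true, false, true, false, true, true, false, true, false, true, false, true, true, false, true, true, false]
  | 36 => [true, false, true, false, true, true, false, true, false, true, true, false, true, false, true, false, true, true, false, true, true, false, true, false, true, false, true, true, false, true, true, false, true, false]
  | 37 => [true, false, true, false, true, true, false, true, false, true, true, false, true, false, true, false]
  | 38 => [true, false, true, false, true, true, false]
  | 39 => [true, false, true, false, true, true, false, true, false, true, true, false, true, false, true, true, false]
  | 40 => [true, true, false, true, false, true, false]
  | 41 => [true, false, true, false, true, true, false, true, false, true, true, false, true, true, false, true, false]
  | 42 => [true, false, true, false, true, true, false, true, false, true, true, false, true, false, true, false, true, true, false, true, true, false, true, false, true]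
  | 43 => [true, true, false, true, false, true, false, true]
  | 44 => [true, false, true, false, true, true, false, true, false, true, true, false, true, false, true, false, true, true, false, true, true, false, true, false]
  | 45 => [true, false, true, false, true, true, false, true, false, true, false, true, true, false, true, false, true, false, true, true]
  | 46 => [true, true, false, true, true]
  | 47 => [true, true, false, true, false]
  | 48 => [true, false, true, false, true, true, false, true, false, true, true, false, true, false, true, false, true, true, false, true, true, false, true, false, true, false, true, true, false, true, true]
  | 49 => [true, true, false, true, true, false, true, false, true, true, false, true]
  | 50 => [true, false, true, false, true, true, false, true, false, true, false, true, true, false, true, true, false, true, false, true, false]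
  | 51 => [true, false, true, false, true, true, false, true, false, true, true, false, true, false, true, false, true, true, false, true, true, false]
  | 52 => [true, false, true, false, true, true, false, true, false, true, true, false, true, false]
  | 53 => [true, false, true, false, true, true, false, true, false, true, true, false, true, false, true, false, true, true, false, true, true, false, true, false, true, false, true, true, false, true, true, false, true]
  | 54 => [true, false, true, false, true, true, false, true, false, true, true]
  | 55 => [true, false, true, false, true, true, false, true, false, true, true, false, true, false, true, false, true, true, false, true, true, false, true, false, true, false, true, true, false, true, false, true, true]
  | 56 => [true, false, true, false, true, true, false, true, false, true]
  | 57 => [true, false, true, false, true, true, false, true, false, true, true, false, true, false, true, false, true, false]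
  | 58 => [true, false, true, false, true, true, false, true, false, true, false, true, true, false, true, false, true, true]
  | 59 => [true, false, true, false, true, true, false, true]
  | 60 => [true, false, true, false, true, true, false, true, false, true, true, false, true, true, false]
  | 61 => [true, false, true, false, true, true, false, true, false, true, true, false, true, false, true, true]
  | 62 => [true, false, true, true, false]
  | 63 => [true, false, true, false, true, true, false, true, false, true, true, false, true, true]
  | 64 => [true, true, false, true, true, false, true, false, true, true, false, true, false, true]
  | 65 => [true, false, true, false, true]
  | 66 => [true, false, true, false, true, true, false, true, false, true, false, true, true, false, true, true, false, true, false, true, false, true]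
  | 67 => [true, false, true, false, true, true, false, true, false, true, true, false, true, false, true, false, true, true, false]
  | 68 => [true, false, true, false, true, true, false, true, false, true, true, false, true, false, true, false, true, true, false, true, true, false, true, false, true, true]
  | 69 => [true, false, true, false, true, true, false, true, false, true, false, true, true, false, true, false, true, false, true]
  | 70 => [true, false, true, false, true, false]
  | 71 => [true, false, true, false, true, true, false, true, false, true, true, false, true, false, true, false, true, true, false, true, true, false, true, false, true, false, true, true, false, true, false, true]
  | 72 => [true, false, true, false, true, true, false, true, false, true, true, false, true]
  | 73 => [true, false, true, false, true, true, false, true, false, true, true, false, true, false, true, false, true, true, false, true, true, false, true, false, true, false]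
  | 74 => [true, false, true, false, true, true, false, true, false, true, true, false]
  | 75 => [true, true, false, true, true, false, true]
  | 76 => [true, false, true, false, true, true, false, true, false, true, true, false, true, false, true, false, true, true, false, true, true, false, true, false, true, false, true, true, false]
  | 77 => [true, true, false, true, true, false, true, false, true, true, false]
  | 78 => [true, false, true, false, true, true, false, true, false, true, false, true, true]
  | 79 => [true, false]
  | 80 => [true]
  | 81 => [true, true, false, true, true, false]
  | 82 => [true, false, true, false, true, true, false, true, false, true, false, true, true, false, true, false, true, false, true, true, false, true]
  | 83 => [true, false, true, true]
  | 84 => [false]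
  | 85 => [true, true, false]
  | 86 => [true, false, true, false, true, true, false, true, false, true, false, true, true, false, true, false, true, false, true, true, false]
  | 87 => [true, false, true, false, true, true, false, true, false, true, true, false, true, false, true, false, true, true, false, true, true, false, true, false, true, false, true, true, false, true, false, true, false]
  | 88 => [true, false, true, false, true, true, false, true, false, true, false, true, true, false, true, true, false, true, false, true, false, true, false]
  | 89 => [true, true, false, true]
  | 90 => [true, false, true, false, true, true, false, true, false, true, true, false, true, false, true, false, true, true, false, true, true, false, true, false, true, false, true, true, false, true]
  | 91 => [true, true, false, true, false, true, false, true, false]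
  | 92 => [true, false, true, false, true, true, false, true, false, true, false, true, false]
  | 93 => [true, false, true, false, true, true, false, true, false, true, false, true, true, false, true, true, false, true, false, true]
  | 94 => [true, false, true, false, true, true, false, true, true]
  | 95 => [true, false, true, false, true, true, false, true, false]
  | 96 => [true, false, true, false, true, true, false, true, false, true, true, false, true, false, true, false, true, true, false, true, true]
  | 97 => [true, false, true, false, true, true, false, true, false, true, false, true, true, false, true, false, true]
  | 98 => [true, true, false, true, true, false, true, false, true, true]
  | _ => [true, false, true, false, true, true, false, true, false, true, false, true, true, false, true, false, true, true, false]


def applyWord (l : List Bool) : Equiv.Perm (Fin 100) :=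
  l.foldl (fun acc b => (if b then sigma1 else sigma0) * acc) 1


lemma appendWord (l : List Bool) (b : Bool) (z : Fin 100) :
    applyWord (l ++ [b]) z = (if b then sigma1 else sigma0) (applyWord l z) := by
  cases b <;> simp [applyWord, List.foldl_append]

lemma ws_1 : applyWord (wordOf 1) 1 = 1 := rfl
set_option maxRecDepth 8000 in
lemma ws_84 : applyWord (wordOf 84) 1 = 84 := by
  show applyWord (wordOf 1 ++ [false]) 1 = 84
  rw [appendWord, ws_1]
  decide
set_option maxRecDepth 8000 in
lemma ws_80 : applyWord (wordOf 80) 1 = 80 := by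
  show applyWord (wordOf 1 ++ [true]) 1 = 80
  rw [appendWord, ws_1]
  decide
set_option maxRecDepth 8000 in
lemma ws_79 : applyWord (wordOf 79) 1 = 79 := by
  show applyWord (wordOf 80 ++ [false]) 1 = 79
  rw [appendWord, ws_80]
  decide
set_option maxRecDepth 8000 in
lemma ws_22 : applyWord (wordOf 22) 1 = 22 := by
  show applyWord (wordOf 80 ++ [true]) 1 = 22
  rw [appendWord, ws_80]
  decide
set_option maxRecDepth 8000 in
lemma ws_0 : applyWord (wordOf 0) 1 = 0 := by
  show applyWord (wordOf 79 ++ [true]) 1 = 0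
  rw [appendWord, ws_79]
  decide
set_option maxRecDepth 8000 in
lemma ws_85 : applyWord (wordOf 85) 1 = 85 := by
  show applyWord (wordOf 22 ++ [false]) 1 = 85
  rw [appendWord, ws_22]
  decide
set_option maxRecDepth 8000 in
lemma ws_12 : applyWord (wordOf 12) 1 = 12 := by
  show applyWord (wordOf 0 ++ [false]) 1 = 12
  rw [appendWord, ws_0]
  decide
set_option maxRecDepth 8000 in
lemma ws_83 : applyWord (wordOf 83) 1 = 83 := by
  show applyWord (wordOf 0 ++ [true]) 1 = 83
  rw [appendWord, ws_0]
  decide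
set_option maxRecDepth 8000 in
lemma ws_89 : applyWord (wordOf 89) 1 = 89 := by
  show applyWord (wordOf 85 ++ [true]) 1 = 89
  rw [appendWord, ws_85]
  decide
set_option maxRecDepth 8000 in
lemma ws_65 : applyWord (wordOf 65) 1 = 65 := by
  show applyWord (wordOf 12 ++ [true]) 1 = 65
  rw [appendWord, ws_12]
  decide
set_option maxRecDepth 8000 in
lemma ws_62 : applyWord (wordOf 62) 1 = 62 := by
  show applyWord (wordOf 83 ++ [false]) 1 = 62
  rw [appendWord, ws_83]
  decide
set_option maxRecDepth 8000 in
lemma ws_47 : applyWord (wordOf 47) 1 = 47 := by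
  show applyWord (wordOf 89 ++ [false]) 1 = 47
  rw [appendWord, ws_89]
  decide
set_option maxRecDepth 8000 in
lemma ws_46 : applyWord (wordOf 46) 1 = 46 := by
  show applyWord (wordOf 89 ++ [true]) 1 = 46
  rw [appendWord, ws_89]
  decide
set_option maxRecDepth 8000 in
lemma ws_70 : applyWord (wordOf 70) 1 = 70 := by
  show applyWord (wordOf 65 ++ [false]) 1 = 70
  rw [appendWord, ws_65]
  decide
set_option maxRecDepth 8000 in
lemma ws_31 : applyWord (wordOf 31) 1 = 31 := by
  show applyWord (wordOf 65 ++ [true]) 1 = 31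
  rw [appendWord, ws_65]
  decide
set_option maxRecDepth 8000 in
lemma ws_10 : applyWord (wordOf 10) 1 = 10 := by
  show applyWord (wordOf 47 ++ [true]) 1 = 10
  rw [appendWord, ws_47]
  decide
set_option maxRecDepth 8000 in
lemma ws_81 : applyWord (wordOf 81) 1 = 81 := by
  show applyWord (wordOf 46 ++ [false]) 1 = 81
  rw [appendWord, ws_46]
  decide
set_option maxRecDepth 8000 in
lemma ws_38 : applyWord (wordOf 38) 1 = 38 := by
  show applyWord (wordOf 31 ++ [false]) 1 = 38
  rw [appendWord, ws_31]
  decide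
set_option maxRecDepth 8000 in
lemma ws_40 : applyWord (wordOf 40) 1 = 40 := by
  show applyWord (wordOf 10 ++ [false]) 1 = 40
  rw [appendWord, ws_10]
  decide
set_option maxRecDepth 8000 in
lemma ws_75 : applyWord (wordOf 75) 1 = 75 := by
  show applyWord (wordOf 81 ++ [true]) 1 = 75
  rw [appendWord, ws_81]
  decide
set_option maxRecDepth 8000 in
lemma ws_59 : applyWord (wordOf 59) 1 = 59 := by
  show applyWord (wordOf 38 ++ [true]) 1 = 59
  rw [appendWord, ws_38]
  decide
set_option maxRecDepth 8000 in
lemma ws_43 : applyWord (wordOf 43) 1 = 43 := by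
  show applyWord (wordOf 40 ++ [true]) 1 = 43
  rw [appendWord, ws_40]
  decide
set_option maxRecDepth 8000 in
lemma ws_25 : applyWord (wordOf 25) 1 = 25 := by
  show applyWord (wordOf 75 ++ [false]) 1 = 25
  rw [appendWord, ws_75]
  decide
set_option maxRecDepth 8000 in
lemma ws_95 : applyWord (wordOf 95) 1 = 95 := by
  show applyWord (wordOf 59 ++ [false]) 1 = 95
  rw [appendWord, ws_59]
  decide
set_option maxRecDepth 8000 in
lemma ws_94 : applyWord (wordOf 94) 1 = 94 := by
  show applyWord (wordOf 59 ++ [true]) 1 = 94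
  rw [appendWord, ws_59]
  decide
set_option maxRecDepth 8000 in
lemma ws_91 : applyWord (wordOf 91) 1 = 91 := by
  show applyWord (wordOf 43 ++ [false]) 1 = 91
  rw [appendWord, ws_43]
  decide
set_option maxRecDepth 8000 in
lemma ws_15 : applyWord (wordOf 15) 1 = 15 := by
  show applyWord (wordOf 25 ++ [true]) 1 = 15
  rw [appendWord, ws_25]
  decide
set_option maxRecDepth 8000 in
lemma ws_56 : applyWord (wordOf 56) 1 = 56 := by
  show applyWord (wordOf 95 ++ [true]) 1 = 56
  rw [appendWord, ws_95]
  decide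
set_option maxRecDepth 8000 in
lemma ws_98 : applyWord (wordOf 98) 1 = 98 := by
  show applyWord (wordOf 15 ++ [true]) 1 = 98
  rw [appendWord, ws_15]
  decide
set_option maxRecDepth 8000 in
lemma ws_4 : applyWord (wordOf 4) 1 = 4 := by
  show applyWord (wordOf 56 ++ [false]) 1 = 4
  rw [appendWord, ws_56]
  decide
set_option maxRecDepth 8000 in
lemma ws_54 : applyWord (wordOf 54) 1 = 54 := by
  show applyWord (wordOf 56 ++ [true]) 1 = 54
  rw [appendWord, ws_56]
  decide
set_option maxRecDepth 8000 in
lemma ws_77 : applyWord (wordOf 77) 1 = 77 := by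
  show applyWord (wordOf 98 ++ [false]) 1 = 77
  rw [appendWord, ws_98]
  decide
set_option maxRecDepth 8000 in
lemma ws_23 : applyWord (wordOf 23) 1 = 23 := by
  show applyWord (wordOf 4 ++ [true]) 1 = 23
  rw [appendWord, ws_4]
  decide
set_option maxRecDepth 8000 in
lemma ws_74 : applyWord (wordOf 74) 1 = 74 := by
  show applyWord (wordOf 54 ++ [false]) 1 = 74
  rw [appendWord, ws_54]
  decide
set_option maxRecDepth 8000 in
lemma ws_49 : applyWord (wordOf 49) 1 = 49 := by
  show applyWord (wordOf 77 ++ [true]) 1 = 49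
  rw [appendWord, ws_77]
  decide
set_option maxRecDepth 8000 in
lemma ws_92 : applyWord (wordOf 92) 1 = 92 := by
  show applyWord (wordOf 23 ++ [false]) 1 = 92
  rw [appendWord, ws_23]
  decide
set_option maxRecDepth 8000 in
lemma ws_78 : applyWord (wordOf 78) 1 = 78 := by
  show applyWord (wordOf 23 ++ [true]) 1 = 78
  rw [appendWord, ws_23]
  decide
set_option maxRecDepth 8000 in
lemma ws_72 : applyWord (wordOf 72) 1 = 72 := by
  show applyWord (wordOf 74 ++ [true]) 1 = 72
  rw [appendWord, ws_74]
  decide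
set_option maxRecDepth 8000 in
lemma ws_13 : applyWord (wordOf 13) 1 = 13 := by
  show applyWord (wordOf 49 ++ [false]) 1 = 13
  rw [appendWord, ws_49]
  decide
set_option maxRecDepth 8000 in
lemma ws_11 : applyWord (wordOf 11) 1 = 11 := by
  show applyWord (wordOf 78 ++ [false]) 1 = 11
  rw [appendWord, ws_78]
  decide
set_option maxRecDepth 8000 in
lemma ws_52 : applyWord (wordOf 52) 1 = 52 := by
  show applyWord (wordOf 72 ++ [false]) 1 = 52
  rw [appendWord, ws_72]
  decide
set_option maxRecDepth 8000 in
lemma ws_63 : applyWord (wordOf 63) 1 = 63 := by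
  show applyWord (wordOf 72 ++ [true]) 1 = 63
  rw [appendWord, ws_72]
  decide
set_option maxRecDepth 8000 in
lemma ws_64 : applyWord (wordOf 64) 1 = 64 := by
  show applyWord (wordOf 13 ++ [true]) 1 = 64
  rw [appendWord, ws_13]
  decide
set_option maxRecDepth 8000 in
lemma ws_2 : applyWord (wordOf 2) 1 = 2 := by
  show applyWord (wordOf 11 ++ [true]) 1 = 2
  rw [appendWord, ws_11]
  decide
set_option maxRecDepth 8000 in
lemma ws_14 : applyWord (wordOf 14) 1 = 14 := by
  show applyWord (wordOf 52 ++ [true]) 1 = 14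
  rw [appendWord, ws_52]
  decide
set_option maxRecDepth 8000 in
lemma ws_60 : applyWord (wordOf 60) 1 = 60 := by
  show applyWord (wordOf 63 ++ [false]) 1 = 60
  rw [appendWord, ws_63]
  decide
set_option maxRecDepth 8000 in
lemma ws_27 : applyWord (wordOf 27) 1 = 27 := by
  show applyWord (wordOf 64 ++ [false]) 1 = 27
  rw [appendWord, ws_64]
  decide
set_option maxRecDepth 8000 in
lemma ws_19 : applyWord (wordOf 19) 1 = 19 := by
  show applyWord (wordOf 64 ++ [true]) 1 = 19
  rw [appendWord, ws_64]
  decide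
set_option maxRecDepth 8000 in
lemma ws_20 : applyWord (wordOf 20) 1 = 20 := by
  show applyWord (wordOf 2 ++ [false]) 1 = 20
  rw [appendWord, ws_2]
  decide
set_option maxRecDepth 8000 in
lemma ws_9 : applyWord (wordOf 9) 1 = 9 := by
  show applyWord (wordOf 2 ++ [true]) 1 = 9
  rw [appendWord, ws_2]
  decide
set_option maxRecDepth 8000 in
lemma ws_37 : applyWord (wordOf 37) 1 = 37 := by
  show applyWord (wordOf 14 ++ [false]) 1 = 37
  rw [appendWord, ws_14]
  decide
set_option maxRecDepth 8000 in
lemma ws_61 : applyWord (wordOf 61) 1 = 61 := by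
  show applyWord (wordOf 14 ++ [true]) 1 = 61
  rw [appendWord, ws_14]
  decide
set_option maxRecDepth 8000 in
lemma ws_8 : applyWord (wordOf 8) 1 = 8 := by
  show applyWord (wordOf 60 ++ [true]) 1 = 8
  rw [appendWord, ws_60]
  decide
set_option maxRecDepth 8000 in
lemma ws_17 : applyWord (wordOf 17) 1 = 17 := by
  show applyWord (wordOf 19 ++ [false]) 1 = 17
  rw [appendWord, ws_19]
  decide
set_option maxRecDepth 8000 in
lemma ws_97 : applyWord (wordOf 97) 1 = 97 := by
  show applyWord (wordOf 20 ++ [true]) 1 = 97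
  rw [appendWord, ws_20]
  decide
set_option maxRecDepth 8000 in
lemma ws_35 : applyWord (wordOf 35) 1 = 35 := by
  show applyWord (wordOf 9 ++ [false]) 1 = 35
  rw [appendWord, ws_9]
  decide
set_option maxRecDepth 8000 in
lemma ws_24 : applyWord (wordOf 24) 1 = 24 := by
  show applyWord (wordOf 37 ++ [true]) 1 = 24
  rw [appendWord, ws_37]
  decide
set_option maxRecDepth 8000 in
lemma ws_39 : applyWord (wordOf 39) 1 = 39 := by
  show applyWord (wordOf 61 ++ [false]) 1 = 39
  rw [appendWord, ws_61]
  decide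
set_option maxRecDepth 8000 in
lemma ws_41 : applyWord (wordOf 41) 1 = 41 := by
  show applyWord (wordOf 8 ++ [false]) 1 = 41
  rw [appendWord, ws_8]
  decide
set_option maxRecDepth 8000 in
lemma ws_30 : applyWord (wordOf 30) 1 = 30 := by
  show applyWord (wordOf 97 ++ [false]) 1 = 30
  rw [appendWord, ws_97]
  decide
set_option maxRecDepth 8000 in
lemma ws_58 : applyWord (wordOf 58) 1 = 58 := by
  show applyWord (wordOf 97 ++ [true]) 1 = 58
  rw [appendWord, ws_97]
  decide
set_option maxRecDepth 8000 in
lemma ws_28 : applyWord (wordOf 28) 1 = 28 := by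
  show applyWord (wordOf 35 ++ [true]) 1 = 28
  rw [appendWord, ws_35]
  decide
set_option maxRecDepth 8000 in
lemma ws_57 : applyWord (wordOf 57) 1 = 57 := by
  show applyWord (wordOf 24 ++ [false]) 1 = 57
  rw [appendWord, ws_24]
  decide
set_option maxRecDepth 8000 in
lemma ws_6 : applyWord (wordOf 6) 1 = 6 := by
  show applyWord (wordOf 24 ++ [true]) 1 = 6
  rw [appendWord, ws_24]
  decide
set_option maxRecDepth 8000 in
lemma ws_33 : applyWord (wordOf 33) 1 = 33 := by
  show applyWord (wordOf 39 ++ [true]) 1 = 33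
  rw [appendWord, ws_39]
  decide
set_option maxRecDepth 8000 in
lemma ws_69 : applyWord (wordOf 69) 1 = 69 := by
  show applyWord (wordOf 30 ++ [true]) 1 = 69
  rw [appendWord, ws_30]
  decide
set_option maxRecDepth 8000 in
lemma ws_99 : applyWord (wordOf 99) 1 = 99 := by
  show applyWord (wordOf 58 ++ [false]) 1 = 99
  rw [appendWord, ws_58]
  decide
set_option maxRecDepth 8000 in
lemma ws_26 : applyWord (wordOf 26) 1 = 26 := by
  show applyWord (wordOf 28 ++ [false]) 1 = 26
  rw [appendWord, ws_28]
  decide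
set_option maxRecDepth 8000 in
lemma ws_67 : applyWord (wordOf 67) 1 = 67 := by
  show applyWord (wordOf 6 ++ [false]) 1 = 67
  rw [appendWord, ws_6]
  decide
set_option maxRecDepth 8000 in
lemma ws_45 : applyWord (wordOf 45) 1 = 45 := by
  show applyWord (wordOf 69 ++ [true]) 1 = 45
  rw [appendWord, ws_69]
  decide
set_option maxRecDepth 8000 in
lemma ws_93 : applyWord (wordOf 93) 1 = 93 := by
  show applyWord (wordOf 26 ++ [true]) 1 = 93
  rw [appendWord, ws_26]
  decide
set_option maxRecDepth 8000 in
lemma ws_21 : applyWord (wordOf 21) 1 = 21 := by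
  show applyWord (wordOf 67 ++ [true]) 1 = 21
  rw [appendWord, ws_67]
  decide
set_option maxRecDepth 8000 in
lemma ws_86 : applyWord (wordOf 86) 1 = 86 := by
  show applyWord (wordOf 45 ++ [false]) 1 = 86
  rw [appendWord, ws_45]
  decide
set_option maxRecDepth 8000 in
lemma ws_50 : applyWord (wordOf 50) 1 = 50 := by
  show applyWord (wordOf 93 ++ [false]) 1 = 50
  rw [appendWord, ws_93]
  decide
set_option maxRecDepth 8000 in
lemma ws_34 : applyWord (wordOf 34) 1 = 34 := by
  show applyWord (wordOf 21 ++ [false]) 1 = 34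
  rw [appendWord, ws_21]
  decide
set_option maxRecDepth 8000 in
lemma ws_96 : applyWord (wordOf 96) 1 = 96 := by
  show applyWord (wordOf 21 ++ [true]) 1 = 96
  rw [appendWord, ws_21]
  decide
set_option maxRecDepth 8000 in
lemma ws_82 : applyWord (wordOf 82) 1 = 82 := by
  show applyWord (wordOf 86 ++ [true]) 1 = 82
  rw [appendWord, ws_86]
  decide
set_option maxRecDepth 8000 in
lemma ws_66 : applyWord (wordOf 66) 1 = 66 := by
  show applyWord (wordOf 50 ++ [true]) 1 = 66
  rw [appendWord, ws_50]
  decide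
set_option maxRecDepth 8000 in
lemma ws_51 : applyWord (wordOf 51) 1 = 51 := by
  show applyWord (wordOf 96 ++ [false]) 1 = 51
  rw [appendWord, ws_96]
  decide
set_option maxRecDepth 8000 in
lemma ws_5 : applyWord (wordOf 5) 1 = 5 := by
  show applyWord (wordOf 82 ++ [false]) 1 = 5
  rw [appendWord, ws_82]
  decide
set_option maxRecDepth 8000 in
lemma ws_88 : applyWord (wordOf 88) 1 = 88 := by
  show applyWord (wordOf 66 ++ [false]) 1 = 88
  rw [appendWord, ws_66]
  decide
set_option maxRecDepth 8000 in
lemma ws_18 : applyWord (wordOf 18) 1 = 18 := by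
  show applyWord (wordOf 51 ++ [true]) 1 = 18
  rw [appendWord, ws_51]
  decide
set_option maxRecDepth 8000 in
lemma ws_44 : applyWord (wordOf 44) 1 = 44 := by
  show applyWord (wordOf 18 ++ [false]) 1 = 44
  rw [appendWord, ws_18]
  decide
set_option maxRecDepth 8000 in
lemma ws_42 : applyWord (wordOf 42) 1 = 42 := by
  show applyWord (wordOf 44 ++ [true]) 1 = 42
  rw [appendWord, ws_44]
  decide
set_option maxRecDepth 8000 in
lemma ws_73 : applyWord (wordOf 73) 1 = 73 := by
  show applyWord (wordOf 42 ++ [false]) 1 = 73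
  rw [appendWord, ws_42]
  decide
set_option maxRecDepth 8000 in
lemma ws_68 : applyWord (wordOf 68) 1 = 68 := by
  show applyWord (wordOf 42 ++ [true]) 1 = 68
  rw [appendWord, ws_42]
  decide
set_option maxRecDepth 8000 in
lemma ws_32 : applyWord (wordOf 32) 1 = 32 := by
  show applyWord (wordOf 73 ++ [true]) 1 = 32
  rw [appendWord, ws_73]
  decide
set_option maxRecDepth 8000 in
lemma ws_16 : applyWord (wordOf 16) 1 = 16 := by
  show applyWord (wordOf 32 ++ [true]) 1 = 16
  rw [appendWord, ws_32]
  decide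
set_option maxRecDepth 8000 in
lemma ws_76 : applyWord (wordOf 76) 1 = 76 := by
  show applyWord (wordOf 16 ++ [false]) 1 = 76
  rw [appendWord, ws_16]
  decide
set_option maxRecDepth 8000 in
lemma ws_90 : applyWord (wordOf 90) 1 = 90 := by
  show applyWord (wordOf 76 ++ [true]) 1 = 90
  rw [appendWord, ws_76]
  decide
set_option maxRecDepth 8000 in
lemma ws_29 : applyWord (wordOf 29) 1 = 29 := by
  show applyWord (wordOf 90 ++ [false]) 1 = 29
  rw [appendWord, ws_90]
  decide
set_option maxRecDepth 8000 in
lemma ws_48 : applyWord (wordOf 48) 1 = 48 := by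
  show applyWord (wordOf 90 ++ [true]) 1 = 48
  rw [appendWord, ws_90]
  decide
set_option maxRecDepth 8000 in
lemma ws_71 : applyWord (wordOf 71) 1 = 71 := by
  show applyWord (wordOf 29 ++ [true]) 1 = 71
  rw [appendWord, ws_29]
  decide
set_option maxRecDepth 8000 in
lemma ws_3 : applyWord (wordOf 3) 1 = 3 := by
  show applyWord (wordOf 48 ++ [false]) 1 = 3
  rw [appendWord, ws_48]
  decide
set_option maxRecDepth 8000 in
lemma ws_87 : applyWord (wordOf 87) 1 = 87 := by
  show applyWord (wordOf 71 ++ [false]) 1 = 87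
  rw [appendWord, ws_71]
  decide
set_option maxRecDepth 8000 in
lemma ws_55 : applyWord (wordOf 55) 1 = 55 := by
  show applyWord (wordOf 71 ++ [true]) 1 = 55
  rw [appendWord, ws_71]
  decide
set_option maxRecDepth 8000 in
lemma ws_53 : applyWord (wordOf 53) 1 = 53 := by
  show applyWord (wordOf 3 ++ [true]) 1 = 53
  rw [appendWord, ws_3]
  decide
set_option maxRecDepth 8000 in
lemma ws_7 : applyWord (wordOf 7) 1 = 7 := by
  show applyWord (wordOf 55 ++ [false]) 1 = 7
  rw [appendWord, ws_55]
  decide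
set_option maxRecDepth 8000 in
lemma ws_36 : applyWord (wordOf 36) 1 = 36 := by
  show applyWord (wordOf 53 ++ [false]) 1 = 36
  rw [appendWord, ws_53]
  decide
def word_spec : ∀ x : Fin 100, applyWord (wordOf x) 1 = x
  | ⟨0, _⟩ => ws_0
  | ⟨1, _⟩ => ws_1
  | ⟨2, _⟩ => ws_2
  | ⟨3, _⟩ => ws_3
  | ⟨4, _⟩ => ws_4
  | ⟨5, _⟩ => ws_5
  | ⟨6, _⟩ => ws_6
  | ⟨7, _⟩ => ws_7
  | ⟨8, _⟩ => ws_8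
  | ⟨9, _⟩ => ws_9
  | ⟨10, _⟩ => ws_10
  | ⟨11, _⟩ => ws_11
  | ⟨12, _⟩ => ws_12
  | ⟨13, _⟩ => ws_13
  | ⟨14, _⟩ => ws_14
  | ⟨15, _⟩ => ws_15
  | ⟨16, _⟩ => ws_16
  | ⟨17, _⟩ => ws_17
  | ⟨18, _⟩ => ws_18
  | ⟨19, _⟩ => ws_19
  | ⟨20, _⟩ => ws_20
  | ⟨21, _⟩ => ws_21
  | ⟨22, _⟩ => ws_22
  | ⟨23, _⟩ => ws_23
  | ⟨24, _⟩ => ws_24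
  | ⟨25, _⟩ => ws_25
  | ⟨26, _⟩ => ws_26
  | ⟨27, _⟩ => ws_27
  | ⟨28, _⟩ => ws_28
  | ⟨29, _⟩ => ws_29
  | ⟨30, _⟩ => ws_30
  | ⟨31, _⟩ => ws_31
  | ⟨32, _⟩ => ws_32
  | ⟨33, _⟩ => ws_33
  | ⟨34, _⟩ => ws_34
  | ⟨35, _⟩ => ws_35
  | ⟨36, _⟩ => ws_36
  | ⟨37, _⟩ => ws_37
  | ⟨38, _⟩ => ws_38
  | ⟨39, _⟩ => ws_39
  | ⟨40, _⟩ => ws_40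
  | ⟨41, _⟩ => ws_41
  | ⟨42, _⟩ => ws_42
  | ⟨43, _⟩ => ws_43
  | ⟨44, _⟩ => ws_44
  | ⟨45, _⟩ => ws_45
  | ⟨46, _⟩ => ws_46
  | ⟨47, _⟩ => ws_47
  | ⟨48, _⟩ => ws_48
  | ⟨49, _⟩ => ws_49
  | ⟨50, _⟩ => ws_50
  | ⟨51, _⟩ => ws_51
  | ⟨52, _⟩ => ws_52
  | ⟨53, _⟩ => ws_53
  | ⟨54, _⟩ => ws_54
  | ⟨55, _⟩ => ws_55
  | ⟨56, _⟩ => ws_56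
  | ⟨57, _⟩ => ws_57
  | ⟨58, _⟩ => ws_58
  | ⟨59, _⟩ => ws_59
  | ⟨60, _⟩ => ws_60
  | ⟨61, _⟩ => ws_61
  | ⟨62, _⟩ => ws_62
  | ⟨63, _⟩ => ws_63
  | ⟨64, _⟩ => ws_64
  | ⟨65, _⟩ => ws_65
  | ⟨66, _⟩ => ws_66
  | ⟨67, _⟩ => ws_67
  | ⟨68, _⟩ => ws_68
  | ⟨69, _⟩ => ws_69
  | ⟨70, _⟩ => ws_70
  | ⟨71, _⟩ => ws_71
  | ⟨72, _⟩ => ws_72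
  | ⟨73, _⟩ => ws_73
  | ⟨74, _⟩ => ws_74
  | ⟨75, _⟩ => ws_75
  | ⟨76, _⟩ => ws_76
  | ⟨77, _⟩ => ws_77
  | ⟨78, _⟩ => ws_78
  | ⟨79, _⟩ => ws_79
  | ⟨80, _⟩ => ws_80
  | ⟨81, _⟩ => ws_81
  | ⟨82, _⟩ => ws_82
  | ⟨83, _⟩ => ws_83
  | ⟨84, _⟩ => ws_84
  | ⟨85, _⟩ => ws_85
  | ⟨86, _⟩ => ws_86
  | ⟨87, _⟩ => ws_87
  | ⟨88, _⟩ => ws_88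
  | ⟨89, _⟩ => ws_89
  | ⟨90, _⟩ => ws_90
  | ⟨91, _⟩ => ws_91
  | ⟨92, _⟩ => ws_92
  | ⟨93, _⟩ => ws_93
  | ⟨94, _⟩ => ws_94
  | ⟨95, _⟩ => ws_95
  | ⟨96, _⟩ => ws_96
  | ⟨97, _⟩ => ws_97
  | ⟨98, _⟩ => ws_98
  | ⟨99, _⟩ => ws_99
  | ⟨n+100, h⟩ => absurd h (by omega)


lemma applyWord_mem (phi : Matrix.SpecialLinearGroup (Fin 2) ℤ →* Equiv.Perm (Fin 100))
    (hS : phi ModularGroup.S = sigma0)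
    (hST : phi (ModularGroup.S * ModularGroup.T) = sigma1) (l : List Bool) :
    applyWord l ∈ phi.range := by
  induction l using List.reverseRecOn with
  | nil => exact one_mem _
  | append_singleton l b ih =>
      have : applyWord (l ++ [b]) = (if b then sigma1 else sigma0) * applyWord l := by
        simp [applyWord, List.foldl_append]
      rw [this]
      refine mul_mem ?_ ih
      cases b
      · exact ⟨ModularGroup.S, by simpa using hS⟩
      · exact ⟨ModularGroup.S * ModularGroup.T, by simpa using hST⟩

/-- The subgroup `Γ = φ⁻¹(Stab(1))` has index 100 in `SL₂(ℤ)`. -/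
theorem Gamma_index (phi : Matrix.SpecialLinearGroup (Fin 2) ℤ →* Equiv.Perm (Fin 100))
    (hS : phi ModularGroup.S = sigma0)
    (hST : phi (ModularGroup.S * ModularGroup.T) = sigma1) :
    (Gamma' phi).index = 100 := by
  have htrans : MulAction.IsPretransitive phi.range (Fin 100) := by
    constructor
    intro x y
    refine ⟨⟨applyWord (wordOf y) * (applyWord (wordOf x))⁻¹,
      mul_mem (applyWord_mem phi hS hST _) (inv_mem (applyWord_mem phi hS hST _))⟩, ?_⟩
    have hx := word_spec x
    have hy := word_spec y
    show (applyWord (wordOf y) * (applyWord (wordOf x))⁻¹) x = y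
    simp only [Equiv.Perm.mul_apply]
    have h1 : (applyWord (wordOf x))⁻¹ x = (1 : Fin 100) := by
      rw [Equiv.Perm.inv_def, Equiv.symm_apply_eq]; exact hx.symm
    rw [h1, hy]
  have hsub : (MulAction.stabilizer (Equiv.Perm (Fin 100)) (1 : Fin 100)).subgroupOf phi.range
      = MulAction.stabilizer phi.range (1 : Fin 100) := by
    ext g
    simp only [Subgroup.mem_subgroupOf, MulAction.mem_stabilizer_iff]
    rfl
  rw [Gamma', Subgroup.index_comap, Subgroup.relIndex, hsub,
    MulAction.index_stabilizer_of_transitive]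
  simp
end

section
/- The subgroup Γ = φ⁻¹(Stab(1)) of SL₂(ℤ) contains no element of order 4 (equivalently, its image in PSL₂(ℤ) contains no element of order 2, reflecting the absence of elliptic points of order two). -/
/-! An element `γ` of order four in `SL₂(ℤ)` satisfies `γ² = -1` (the only involution is `-1`),
so `γ = [[a, b], [c, -a]]` with `a² + bc = -1`. Such a matrix is conjugate to `S` or `S⁻¹`:
conjugating by a power of `T` replaces `a` by `a mod c`, after which `|b| < |c|`, and conjugating
by `S` exchanges `b` and `c` up to sign; the descent on `|c|` stops at `|c| = 1`, where `γ` is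
conjugate to `S^{±1}` by a power of `T`. Hence `φ(γ)` is conjugate to `σ₀^{±1}`, which has no fixed point, whereas
elements of `Γ` fix `1`. -/

open scoped MatrixGroups

lemma conj_mul_self_eq_neg_one {G : Type*} [Group G] [HasDistribNeg G] {a : G} (ha : a * a = -1)
    (b : G) : (b * a * b⁻¹) * (b * a * b⁻¹) = -1 := by
  rw [show b * a * b⁻¹ * (b * a * b⁻¹) = b * (a * a) * b⁻¹ by group, ha, mul_neg, mul_one,
    neg_mul, mul_inv_cancel]

namespace Matrix.SpecialLinearGroup

variable {R : Type*} [CommRing R]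

lemma inv_eq_neg_of_mul_self_eq_neg_one {A : SL(2, R)} (hA : A * A = -1) : A⁻¹ = -A :=
  inv_eq_of_mul_eq_one_right (by rw [mul_neg, hA, neg_neg])

lemma apply_one_one_eq_neg_of_mul_self_eq_neg_one {A : SL(2, R)} (hA : A * A = -1) :
    A 1 1 = -A 0 0 := by
  simpa [SL2_inv_expl] using
    congrArg (fun B : SL(2, R) ↦ B 0 0) (inv_eq_neg_of_mul_self_eq_neg_one hA)

lemma sq_add_mul_eq_neg_one_of_mul_self_eq_neg_one {A : SL(2, R)} (hA : A * A = -1) :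
    A 0 0 ^ 2 + A 0 1 * A 1 0 = -1 := by
  have hdet := A.det_coe
  rw [det_fin_two, apply_one_one_eq_neg_of_mul_self_eq_neg_one hA] at hdet
  linear_combination -hdet

lemma eq_one_or_eq_neg_one_of_mul_self_eq_one [NoZeroDivisors R] [NeZero (2 : R)] {A : SL(2, R)}
    (hA : A * A = 1) : A = 1 ∨ A = -1 := by
  have entry (i j : Fin 2) : A⁻¹ i j = A i j := by rw [inv_eq_of_mul_eq_one_right hA]
  have eq_zero_of_neg_eq {x : R} (hx : -x = x) : x = 0 :=
    (mul_eq_zero.mp (by linear_combination -hx : (2 : R) * x = 0)).resolve_left two_ne_zero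
  have hb : A 0 1 = 0 := eq_zero_of_neg_eq (by simpa [SL2_inv_expl] using entry 0 1)
  have hc : A 1 0 = 0 := eq_zero_of_neg_eq (by simpa [SL2_inv_expl] using entry 1 0)
  have hd : A 1 1 = A 0 0 := by simpa [SL2_inv_expl] using entry 0 0
  have hdet := A.det_coe
  rw [det_fin_two, hb, hd, zero_mul, sub_zero] at hdet
  rcases mul_self_eq_one_iff.mp hdet with ha | ha
  · left
    ext i j
    fin_cases i <;> fin_cases j <;> simp [ha, hb, hc, hd]
  · right
    ext i j
    fin_cases i <;> fin_cases j <;> simp [ha, hb, hc, hd]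

lemma mul_self_eq_neg_one_of_orderOf_eq_four [NoZeroDivisors R] [NeZero (2 : R)] {A : SL(2, R)}
    (hA : orderOf A = 4) : A * A = -1 := by
  have hsq : A ^ 2 * A ^ 2 = 1 := by
    rw [← pow_add, show 2 + 2 = orderOf A from hA.symm, pow_orderOf_eq_one]
  have hsq_ne : A ^ 2 ≠ 1 := pow_ne_one_of_lt_orderOf (by norm_num) (by rw [hA]; norm_num)
  rw [← sq]
  exact (eq_one_or_eq_neg_one_of_mul_self_eq_one hsq).resolve_left hsq_ne

end Matrix.SpecialLinearGroup

namespace ModularGroup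

open Matrix Matrix.SpecialLinearGroup

lemma T_zpow_conj_apply_zero_zero (k : ℤ) (A : SL(2, ℤ)) :
    (T ^ k * A * (T ^ k)⁻¹) 0 0 = A 0 0 + k * A 1 0 := by
  rw [← _root_.zpow_neg]
  simp [coe_T_zpow, vecMul, dotProduct, mul_apply, Fin.sum_univ_two]

lemma T_zpow_conj_apply_one_zero (k : ℤ) (A : SL(2, ℤ)) :
    (T ^ k * A * (T ^ k)⁻¹) 1 0 = A 1 0 := by
  rw [← _root_.zpow_neg]
  simp [coe_T_zpow, vecMul, dotProduct, mul_apply, Fin.sum_univ_two]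

lemma S_conj_apply_one_zero (A : SL(2, ℤ)) : (S * A * S⁻¹) 1 0 = -A 0 1 := by
  simp [S_inv, vecMul, dotProduct, mul_apply, Fin.sum_univ_two]

lemma isConj_S_of_apply_one_zero_eq_one {A : SL(2, ℤ)} (hA : A * A = -1) (hc : A 1 0 = 1) :
    IsConj S A := by
  refine isConj_iff.mpr ⟨T ^ A 0 0, ?_⟩
  rw [← _root_.zpow_neg, ← apply_one_one_eq_neg_of_mul_self_eq_neg_one hA,
    ← g_eq_of_c_eq_one hc]

lemma exists_isConj_natAbs_apply_one_zero_lt {A : SL(2, ℤ)} (hA : A * A = -1)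
    (hc : 1 < (A 1 0).natAbs) :
    ∃ B : SL(2, ℤ), IsConj B A ∧ B * B = -1 ∧ (B 1 0).natAbs < (A 1 0).natAbs := by
  set A' := T ^ (-(A 0 0 / A 1 0)) * A * (T ^ (-(A 0 0 / A 1 0)))⁻¹
  have hA' : A' * A' = -1 := conj_mul_self_eq_neg_one hA _
  have ha' : A' 0 0 = A 0 0 % A 1 0 := by
    rw [T_zpow_conj_apply_zero_zero, Int.emod_def]
    ring
  have hc' : A' 1 0 = A 1 0 := T_zpow_conj_apply_one_zero _ _
  refine ⟨S * A' * S⁻¹,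
    ((isConj_iff.mpr ⟨_, rfl⟩).trans (isConj_iff.mpr ⟨S, rfl⟩)).symm,
    conj_mul_self_eq_neg_one hA' S, ?_⟩
  have hc0 : A 1 0 ≠ 0 := by omega
  have ha'_nonneg : 0 ≤ A' 0 0 := ha' ▸ Int.emod_nonneg _ hc0
  have ha'_lt : A' 0 0 < |A 1 0| := ha' ▸ Int.emod_lt_abs _ hc0
  have hdet := sq_add_mul_eq_neg_one_of_mul_self_eq_neg_one hA'
  rw [hc'] at hdet
  have hprod : |A' 0 1| * |A 1 0| = A' 0 0 ^ 2 + 1 := by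
    rw [← abs_mul, show A' 0 1 * A 1 0 = -(A' 0 0 ^ 2 + 1) by linarith, abs_neg,
      abs_of_pos (by positivity)]
  -- `|b| |c| = a² + 1 ≤ (|c| - 1)² + 1 < |c|²` because `0 ≤ a < |c|` and `|c| ≥ 2`
  have hb_lt : |A' 0 1| < |A 1 0| := by
    have hc_gt : (1 : ℤ) < |A 1 0| := by rw [← Int.natCast_natAbs]; exact_mod_cast hc
    nlinarith
  rw [S_conj_apply_one_zero, Int.natAbs_neg]
  zify
  simpa only [Int.natCast_natAbs] using hb_lt

lemma isConj_S_or_S_inv_of_mul_self_eq_neg_one {A : SL(2, ℤ)} (hA : A * A = -1) :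
    IsConj S A ∨ IsConj S⁻¹ A := by
  induction hn : (A 1 0).natAbs using Nat.strong_induction_on generalizing A with
  | _ n ih =>
  have hc0 : A 1 0 ≠ 0 := by
    intro hc
    have := sq_add_mul_eq_neg_one_of_mul_self_eq_neg_one hA
    rw [hc] at this
    nlinarith
  rcases Nat.lt_or_eq_of_le (Int.natAbs_pos.mpr hc0) with hc | hc
  · obtain ⟨B, hBA, hB, hlt⟩ := exists_isConj_natAbs_apply_one_zero_lt hA hc
    rcases ih _ (hn ▸ hlt) hB rfl with h | h
    · exact .inl (h.trans hBA)
    · exact .inr (h.trans hBA)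
  · rcases Int.natAbs_eq_iff.mp hc.symm with hc | hc
    · exact .inl (isConj_S_of_apply_one_zero_eq_one hA (by exact_mod_cast hc))
    · right
      obtain ⟨g, hg⟩ := isConj_iff.mp (isConj_S_of_apply_one_zero_eq_one (A := -A)
        (by rw [neg_mul_neg, hA]) (by simp [hc]))
      exact isConj_iff.mpr ⟨g, by rw [S_inv, mul_neg, neg_mul, hg, neg_neg]⟩

end ModularGroup

lemma Equiv.Perm.apply_ne_self_of_isConj {α : Type*} {σ τ : Equiv.Perm α} (h : IsConj σ τ)
    (hσ : ∀ x, σ x ≠ x) (x : α) : τ x ≠ x := by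
  obtain ⟨g, rfl⟩ := isConj_iff.mp h
  intro hx
  exact hσ (g⁻¹ x) (Equiv.Perm.eq_inv_iff_eq.mpr hx)

set_option maxRecDepth 10000 in
lemma sigma0_apply_ne_self (x : Fin 100) : sigma0 x ≠ x := by
  revert x; decide

theorem Gamma_no_order_four_general
    (phi : Matrix.SpecialLinearGroup (Fin 2) ℤ →* Equiv.Perm (Fin 100))
    (hS : phi ModularGroup.S = sigma0) :
    ∀ γ ∈ Gamma' phi, orderOf γ ≠ 4 := by
  intro γ hγ h4
  have hfix : phi γ 1 = 1 := hγ
  rcases ModularGroup.isConj_S_or_S_inv_of_mul_self_eq_neg_one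
      (Matrix.SpecialLinearGroup.mul_self_eq_neg_one_of_orderOf_eq_four h4) with h | h
  · exact Equiv.Perm.apply_ne_self_of_isConj (phi.map_isConj h)
      (hS ▸ sigma0_apply_ne_self) 1 hfix
  · refine Equiv.Perm.apply_ne_self_of_isConj (phi.map_isConj h) (fun x hx ↦ ?_) 1 hfix
    rw [map_inv, hS, Equiv.Perm.inv_eq_iff_eq] at hx
    exact sigma0_apply_ne_self x hx.symm

/-- `Γ = φ⁻¹(Stab(1))` contains no element of order 4 (its image in `PSL₂(ℤ)` contains no
element of order 2: there are no elliptic points of order two). -/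
theorem Gamma_no_order_four
    (phi : Matrix.SpecialLinearGroup (Fin 2) ℤ →* Equiv.Perm (Fin 100))
    (hS : phi ModularGroup.S = sigma0)
    (hST : phi (ModularGroup.S * ModularGroup.T) = sigma1) :
    ∀ γ ∈ Gamma' phi, orderOf γ ≠ 4 :=
  Gamma_no_order_four_general phi hS
end

section
/- The polynomial f(a) = a¹⁰ − a⁹ − 2a⁸ + 8a⁷ − 14a⁶ + 35a⁴ − 68a³ + 89a² − 74a + 23 is irreducible over ℚ. -/
open Polynomial

set_option maxHeartbeats 1000000

/-- The polynomial `f(a) = a¹⁰ − a⁹ − 2a⁸ + 8a⁷ − 14a⁶ + 35a⁴ − 68a³ + 89a² − 74a + 23`. -/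
noncomputable def f : ℚ[X] :=
  X ^ 10 - X ^ 9 - 2 * X ^ 8 + 8 * X ^ 7 - 14 * X ^ 6 + 35 * X ^ 4 - 68 * X ^ 3 +
    89 * X ^ 2 - 74 * X + 23

/-- The integer version of `f`. -/
noncomputable def gZ : ℤ[X] :=
  X ^ 10 - X ^ 9 - 2 * X ^ 8 + 8 * X ^ 7 - 14 * X ^ 6 + 35 * X ^ 4 - 68 * X ^ 3 +
    89 * X ^ 2 - 74 * X + 23

lemma gZ_natDegree : gZ.natDegree = 10 := by
  unfold gZ
  compute_degree!

lemma gZ_monic : gZ.Monic := by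
  unfold gZ
  monicity!

/-- The mod 2 reduction of `f`. -/
noncomputable def g2 : (ZMod 2)[X] := gZ.map (Int.castRingHom (ZMod 2))

lemma g2_monic : g2.Monic := gZ_monic.map _

lemma g2_natDegree : g2.natDegree = 10 := by
  rw [g2, gZ_monic.natDegree_map, gZ_natDegree]

/-- Bezout certificates rule out irreducible factors of `g2` of degree `d`. -/
lemma no_factor (d : ℕ) (u v s : ℤ[X])
    (hcert : u * gZ + v * (X ^ 2 ^ d - X) = 1 + 2 * s)
    (q : (ZMod 2)[X]) (hq : Irreducible q) (hd : q.natDegree = d) : ¬ q ∣ g2 := by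
  intro hdvd
  haveI : Fact (Irreducible q) := ⟨hq⟩
  set L := AdjoinRoot q
  have hq0 : q ≠ 0 := hq.ne_zero
  let pb := AdjoinRoot.powerBasis hq0
  haveI : Fintype L := Module.fintypeOfFintype pb.basis
  have hcard : Fintype.card L = 2 ^ d := by
    rw [Module.card_fintype pb.basis, ZMod.card, Fintype.card_fin, AdjoinRoot.powerBasis_dim, hd]
  set α : L := AdjoinRoot.root q with hα
  have hg2 : aeval α g2 = 0 := by
    rw [AdjoinRoot.aeval_eq, AdjoinRoot.mk_eq_zero]
    exact hdvd
  have hgZ : aeval α gZ = 0 := by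
    have := aeval_map_algebraMap (ZMod 2) α gZ
    rw [algebraMap_int_eq, ← g2, hg2] at this
    exact this.symm
  have hpow : α ^ 2 ^ d = α := by
    have := FiniteField.pow_card α
    rwa [hcard] at this
  have h2 : (2 : L) = 0 := by
    rw [show (2 : L) = algebraMap (ZMod 2) L 2 from (map_ofNat _ 2).symm,
      show (2 : ZMod 2) = 0 from rfl, map_zero]
  have := congrArg (aeval α) hcert
  simp only [map_add, map_mul, map_sub, map_pow, map_one, map_ofNat, aeval_X, hgZ, mul_zero,
    hpow, sub_self, zero_add, h2, zero_mul, add_zero] at this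
  exact one_ne_zero this.symm

lemma g2_irreducible : Irreducible g2 := by
  by_contra hirr
  have hunit : ¬ IsUnit g2 := by
    intro h
    have := natDegree_eq_zero_of_isUnit h
    rw [g2_natDegree] at this
    exact absurd this (by norm_num)
  rw [irreducible_iff] at hirr
  push_neg at hirr
  obtain ⟨a, b, hab, ha, hb⟩ := hirr hunit
  have hg2ne : g2 ≠ 0 := g2_monic.ne_zero
  have hane : a ≠ 0 := fun h => hg2ne (by rw [hab, h, zero_mul])
  have hbne : b ≠ 0 := fun h => hg2ne (by rw [hab, h, mul_zero])
  have hdegs : a.natDegree + b.natDegree = 10 := by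
    rw [← natDegree_mul hane hbne, ← hab, g2_natDegree]
  have hdega : 1 ≤ a.natDegree := by
    by_contra h
    push_neg at h
    interval_cases h' : a.natDegree
    · exact ha (Polynomial.isUnit_iff_degree_eq_zero.mpr
        (by rw [degree_eq_natDegree hane, h']; rfl))
  have hdegb : 1 ≤ b.natDegree := by
    by_contra h
    push_neg at h
    interval_cases h' : b.natDegree
    · exact hb (Polynomial.isUnit_iff_degree_eq_zero.mpr
        (by rw [degree_eq_natDegree hbne, h']; rfl))
  -- choose a factor of degree ≤ 5
  obtain ⟨c, hcne, hcu, hcd, hcdeg⟩ :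
      ∃ c : (ZMod 2)[X], c ≠ 0 ∧ ¬ IsUnit c ∧ c ∣ g2 ∧ c.natDegree ≤ 5 := by
    rcases le_or_gt a.natDegree 5 with h | h
    · exact ⟨a, hane, ha, ⟨b, hab⟩, h⟩
    · exact ⟨b, hbne, hb, ⟨a, by rw [hab, mul_comm]⟩, by omega⟩
  obtain ⟨p, hpirr, hpdvd⟩ := WfDvdMonoid.exists_irreducible_factor hcu hcne
  have hpdvdg : p ∣ g2 := hpdvd.trans hcd
  have hpdeg : p.natDegree ≤ 5 := le_trans (natDegree_le_of_dvd hpdvd hcne) hcdeg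
  have hpne : p ≠ 0 := hpirr.ne_zero
  have hpdeg1 : 1 ≤ p.natDegree := by
    by_contra h
    push_neg at h
    interval_cases h' : p.natDegree
    · exact hpirr.not_isUnit (Polynomial.isUnit_iff_degree_eq_zero.mpr
        (by rw [degree_eq_natDegree hpne, h']; rfl))
  interval_cases h' : p.natDegree
  · exact no_factor 1 (1) (X ^ 8 + X ^ 2 + X)
      (X ^ 10 + (-1) * X ^ 9 + (-1) * X ^ 8 + 4 * X ^ 7 + (-7) * X ^ 6 + 18 * X ^ 4 +
        (-34) * X ^ 3 + 44 * X ^ 2 + (-37) * X + 11)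
      (by unfold gZ; ring) p hpirr h' hpdvdg
  · exact no_factor 2 (X ^ 3 + X + 1)
      (X ^ 9 + X ^ 8 + X ^ 7 + X ^ 6 + X ^ 4 + X + 1)
      (X ^ 13 + 4 * X ^ 10 + (-9) * X ^ 9 + 3 * X ^ 8 + 14 * X ^ 7 + (-41) * X ^ 6 +
        62 * X ^ 5 + (-53) * X ^ 4 + 22 * X ^ 3 + 7 * X ^ 2 + (-26) * X + 11)
      (by unfold gZ; ring) p hpirr h' hpdvdg
  · exact no_factor 3 (X ^ 5 + X ^ 4 + X ^ 3 + X ^ 2 + 1)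
      (X ^ 7 + X ^ 3 + X ^ 2)
      (X ^ 15 + (-1) * X ^ 13 + 3 * X ^ 12 + (-4) * X ^ 11 + (-3) * X ^ 10 +
        14 * X ^ 9 + (-25) * X ^ 8 + 32 * X ^ 7 + (-16) * X ^ 6 + (-15) * X ^ 5 +
        36 * X ^ 4 + (-60) * X ^ 3 + 56 * X ^ 2 + (-37) * X + 11)
      (by unfold gZ; ring) p hpirr h' hpdvdg
  · exact no_factor 4 (X ^ 15 + X ^ 14 + X ^ 13 + X ^ 12 + X ^ 9 + X ^ 2 + 1)
      (X ^ 9 + X ^ 5)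
      (X ^ 25 + (-1) * X ^ 23 + 3 * X ^ 22 + (-4) * X ^ 21 + (-4) * X ^ 20 +
        15 * X ^ 19 + (-24) * X ^ 18 + 27 * X ^ 17 + (-5) * X ^ 16 + (-22) * X ^ 15 +
        19 * X ^ 14 + (-8) * X ^ 13 + (-22) * X ^ 12 + 44 * X ^ 11 + (-38) * X ^ 10 +
        15 * X ^ 9 + (-8) * X ^ 8 + 4 * X ^ 7 + 10 * X ^ 6 + (-34) * X ^ 5 +
        62 * X ^ 4 + (-71) * X ^ 3 + 56 * X ^ 2 + (-37) * X + 11)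
      (by unfold gZ; ring) p hpirr h' hpdvdg
  · exact no_factor 5
      (X ^ 30 + X ^ 25 + X ^ 24 + X ^ 22 + X ^ 21 + X ^ 19 + X ^ 17 + X ^ 16 + X ^ 15 +
        X ^ 14 + X ^ 13 + X ^ 11 + X ^ 9 + X ^ 8 + X ^ 5 + X ^ 3 + 1)
      (X ^ 8 + X ^ 7 + X ^ 3 + X ^ 2 + X)
      (X ^ 40 + (-1) * X ^ 38 + 4 * X ^ 37 + (-7) * X ^ 36 + X ^ 35 + 18 * X ^ 34 +
        (-35) * X ^ 33 + 48 * X ^ 32 + (-40) * X ^ 31 + 3 * X ^ 30 + 21 * X ^ 29 +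
        (-20) * X ^ 28 + 3 * X ^ 27 + 29 * X ^ 26 + (-50) * X ^ 25 + 25 * X ^ 24 +
        21 * X ^ 23 + (-64) * X ^ 22 + 70 * X ^ 21 + (-57) * X ^ 20 + 32 * X ^ 19 +
        (-5) * X ^ 18 + (-6) * X ^ 17 + (-12) * X ^ 16 + 34 * X ^ 15 + (-67) * X ^ 14 +
        73 * X ^ 13 + (-50) * X ^ 12 + 14 * X ^ 11 + 12 * X ^ 10 + (-16) * X ^ 9 +
        (-24) * X ^ 8 + 66 * X ^ 7 + (-78) * X ^ 6 + 56 * X ^ 5 + (-20) * X ^ 4 +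
        (-23) * X ^ 3 + 44 * X ^ 2 + (-37) * X + 11)
      (by unfold gZ; ring) p hpirr h' hpdvdg

lemma gZ_irreducible : Irreducible gZ :=
  gZ_monic.irreducible_of_irreducible_map (Int.castRingHom (ZMod 2)) gZ g2_irreducible

/-- `f` is irreducible over `ℚ`. -/
theorem f_irreducible : Irreducible f := by
  have hf : f = gZ.map (Int.castRingHom ℚ) := by
    unfold f gZ
    push_cast [Polynomial.map_sub, Polynomial.map_add, Polynomial.map_mul, Polynomial.map_pow,
      Polynomial.map_ofNat, Polynomial.map_X]
    norm_num
  rw [hf]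
  exact (Polynomial.IsPrimitive.Int.irreducible_iff_irreducible_map_cast gZ_monic.isPrimitive).mp gZ_irreducible
end
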